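/- The Fourier series of f diverges at x = 0: the sequence of Fourier partial sums (S_N(f)(0))_{N≥0} does not converge as N → ∞ (in particular it does not converge to f(0) = 0). -/

import Mathlib

open Finset Real Filter

/-- The trigonometric polynomial `T_{p,q}(x) = Σ_{m=1}^p cos((q−m)x)/m − Σ_{m=1}^p cos((q+m)x)/m`. -/
noncomputable def T (p q : ℕ) (x : ℝ) : ℝ :=
  (∑ m ∈ Finset.Icc 1 p, Real.cos (((q : ℝ) - (m : ℝ)) * x) / (m : ℝ))
    - ∑ m ∈ Finset.Icc 1 p, Real.cos (((q : ℝ) + (m : ℝ)) * x) / (m : ℝ)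

/-- Fourier cosine coefficient `a_n(g) = (1/π) ∫_{-π}^{π} g(t) cos(nt) dt`. -/
noncomputable def fourierA (g : ℝ → ℝ) (n : ℕ) : ℝ :=
  (1 / Real.pi) * ∫ t in (-Real.pi)..Real.pi, g t * Real.cos ((n : ℝ) * t)

/-- Fourier sine coefficient `b_n(g) = (1/π) ∫_{-π}^{π} g(t) sin(nt) dt`. -/
noncomputable def fourierB (g : ℝ → ℝ) (n : ℕ) : ℝ :=
  (1 / Real.pi) * ∫ t in (-Real.pi)..Real.pi, g t * Real.sin ((n : ℝ) * t)

/-- Fourier partial sum `S_N(g)(x) = a_0(g)/2 + Σ_{n=1}^N (a_n(g) cos(nx) + b_n(g) sin(nx))`. -/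
noncomputable def fourierPartialSum (g : ℝ → ℝ) (N : ℕ) (x : ℝ) : ℝ :=
  fourierA g 0 / 2 +
    ∑ n ∈ Finset.Icc 1 N, (fourierA g n * Real.cos ((n : ℝ) * x)
      + fourierB g n * Real.sin ((n : ℝ) * x))

open MeasureTheory

/-!
`T p q x = 2 sin (q x) · ∑_{m ≤ p} sin (m x) / m`, and the partial sums of `∑ sin (m x) / m` are
bounded uniformly in `x`: termwise up to `m ≈ 1 / x`, and beyond by summation by parts against the
Dirichlet bound `|∑_{i < n} sin (i x)| ≤ 1 / sin (x / 2)`. So the series defining `f` is dominated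
by `∑ |a k|` and can be integrated termwise. The frequency blocks `[q k - p k, q k + p k]` are
disjoint, hence the cosine coefficient of `f` at `q K - m` (`1 ≤ m ≤ p K`) is `a K / m`, and at
`x = 0` the partial sums increase by `a K · H (p K) ≥ a K log (p K)` from `N = q K - p K - 1` to
`N = q K - 1`. By the liminf hypothesis these jumps stay bounded away from `0`, so the partial sums
are not Cauchy.
-/

theorem abs_sum_Ico_mul_le_of_antitoneOn {f g : ℕ → ℝ} {M : ℝ} {m n : ℕ}
    (hf : AntitoneOn f (Set.Ici m)) (hf0 : ∀ i, 0 ≤ f i)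
    (hg : ∀ k, |∑ i ∈ range k, g i| ≤ M) (hmn : m < n) :
    |∑ i ∈ Ico m n, f i * g i| ≤ 2 * M * f m := by
  have hby_parts := sum_Ico_by_parts f g hmn
  simp only [smul_eq_mul] at hby_parts
  have htel : ∑ i ∈ Ico m (n - 1), (f i - f (i + 1)) = f m - f (n - 1) := by
    rw [← neg_sub, ← sum_Ico_sub f (by omega), ← sum_neg_distrib]
    simp
  have hdiff : ∀ i ∈ Ico m (n - 1),
      |(f (i + 1) - f i) * ∑ j ∈ range (i + 1), g j| ≤ (f i - f (i + 1)) * M := by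
    intro i hi
    have : f (i + 1) ≤ f i := hf (by simp at hi ⊢; omega) (by simp at hi ⊢; omega) (by omega)
    rw [abs_mul, abs_of_nonpos (by linarith), neg_sub]
    exact mul_le_mul_of_nonneg_left (hg _) (by linarith)
  calc |∑ i ∈ Ico m n, f i * g i|
      ≤ |f (n - 1) * ∑ i ∈ range n, g i| + |f m * ∑ i ∈ range m, g i|
        + |∑ i ∈ Ico m (n - 1), (f (i + 1) - f i) * ∑ j ∈ range (i + 1), g j| := by
        rw [hby_parts]; exact (abs_sub _ _).trans (add_le_add_left (abs_sub _ _) _)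
    _ ≤ f (n - 1) * M + f m * M + (f m - f (n - 1)) * M := by
        gcongr ?_ + ?_ + ?_
        · rw [abs_mul, abs_of_nonneg (hf0 _)]; exact mul_le_mul_of_nonneg_left (hg n) (hf0 _)
        · rw [abs_mul, abs_of_nonneg (hf0 _)]; exact mul_le_mul_of_nonneg_left (hg m) (hf0 _)
        · rw [← htel, sum_mul]
          exact (abs_sum_le_sum_abs _ _).trans (sum_le_sum hdiff)
    _ = 2 * M * f m := by ring

theorem two_mul_sin_half_mul_sum_sin (x : ℝ) (n : ℕ) :
    2 * sin (x / 2) * ∑ i ∈ range n, sin (i * x) = cos (x / 2) - cos ((n - 1 / 2) * x) := by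
  induction n with
  | zero => simp [show (2 : ℝ)⁻¹ * x = x / 2 by ring]
  | succ n ih =>
    have hstep : 2 * sin (x / 2) * sin (n * x) = cos ((n - 1 / 2) * x) - cos ((n + 1 / 2) * x) := by
      rw [cos_sub_cos, show ((n - 1 / 2) * x + (n + 1 / 2) * x) / 2 = n * x by ring,
        show ((n - 1 / 2) * x - (n + 1 / 2) * x) / 2 = -(x / 2) by ring, sin_neg]
      ring
    rw [sum_range_succ, mul_add, ih, hstep]
    push_cast
    ring_nf

theorem abs_sum_sin_le_inv_sin_half {x : ℝ} (hx : 0 < sin (x / 2)) (n : ℕ) :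
    |∑ i ∈ range n, sin (i * x)| ≤ (sin (x / 2))⁻¹ := by
  have hid := two_mul_sin_half_mul_sum_sin x n
  have hbound : |2 * sin (x / 2) * ∑ i ∈ range n, sin (i * x)| ≤ 2 := by
    rw [hid]
    exact (abs_sub _ _).trans
      (by linarith [abs_cos_le_one (x / 2), abs_cos_le_one ((n - 1 / 2) * x)])
  rw [abs_mul, abs_of_pos (by positivity)] at hbound
  rw [← one_div, le_div_iff₀' hx]
  linarith

theorem abs_sum_Ico_sin_div_le_mul (x : ℝ) (hx : 0 ≤ x) (k : ℕ) :
    |∑ m ∈ Ico 1 (k + 1), sin (m * x) / m| ≤ k * x := by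
  calc |∑ m ∈ Ico 1 (k + 1), sin (m * x) / m|
      ≤ ∑ m ∈ Ico 1 (k + 1), |sin (m * x) / m| := abs_sum_le_sum_abs _ _
    _ ≤ ∑ m ∈ Ico 1 (k + 1), x := by
        refine sum_le_sum fun m hm => ?_
        have hm : (1 : ℝ) ≤ m := by simp at hm; exact_mod_cast hm.1
        rw [abs_div, Nat.abs_cast, div_le_iff₀ (by linarith)]
        calc |sin (m * x)| ≤ |m * x| := abs_sin_le_abs
          _ = m * x := abs_of_nonneg (by positivity)
          _ = x * m := mul_comm _ _
    _ = k * x := by simp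

theorem abs_sum_sin_div_le_of_pos {x : ℝ} (hx : 0 < x) (hxπ : x ≤ π) (p : ℕ) :
    |∑ m ∈ Icc 1 p, sin (m * x) / m| ≤ 1 + 2 * π := by
  set N := ⌊x⁻¹⌋₊
  have hNx : N * x ≤ 1 := by
    have := Nat.floor_le (inv_nonneg.mpr hx.le)
    calc (N : ℝ) * x ≤ x⁻¹ * x := by gcongr
      _ = 1 := inv_mul_cancel₀ hx.ne'
  have hxN : 1 ≤ (N + 1) * x := by
    have := Nat.lt_floor_add_one x⁻¹
    rw [inv_lt_iff_one_lt_mul₀ hx] at this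
    linarith
  have hsin : x / π ≤ sin (x / 2) := by
    have := mul_le_sin (x := x / 2) (by positivity) (by linarith)
    calc x / π = 2 / π * (x / 2) := by ring
      _ ≤ sin (x / 2) := this
  have hsin_pos : 0 < sin (x / 2) := (div_pos hx pi_pos).trans_le hsin
  rw [← Ico_add_one_right_eq_Icc]
  rcases le_or_gt p N with hpN | hNp
  · calc |∑ m ∈ Ico 1 (p + 1), sin (m * x) / m| ≤ p * x := abs_sum_Ico_sin_div_le_mul x hx.le p
      _ ≤ N * x := by gcongr
      _ ≤ 1 + 2 * π := by linarith [pi_pos]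
  have htail : |∑ m ∈ Ico (N + 1) (p + 1), sin (m * x) / m| ≤ 2 * π := by
    have hanti : AntitoneOn (fun i : ℕ => (i : ℝ)⁻¹) (Set.Ici (N + 1)) := by
      intro i hi j _ hij
      have : (0 : ℝ) < i := by simp at hi; exact_mod_cast (by omega : 0 < i)
      exact inv_anti₀ this (by exact_mod_cast hij)
    have habel := abs_sum_Ico_mul_le_of_antitoneOn hanti (fun i => inv_nonneg.mpr i.cast_nonneg)
      (abs_sum_sin_le_inv_sin_half hsin_pos) (by omega : N + 1 < p + 1)
    simp only [← div_eq_inv_mul] at habel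
    refine habel.trans ?_
    calc 2 * (sin (x / 2))⁻¹ * ((N + 1 : ℕ) : ℝ)⁻¹ ≤ 2 * (x / π)⁻¹ * x := by
          push_cast
          gcongr
          rw [inv_le_iff_one_le_mul₀ (by positivity)]
          linarith
      _ = 2 * π := by field_simp
  rw [← sum_Ico_consecutive _ (by omega : 1 ≤ N + 1) (by omega : N + 1 ≤ p + 1)]
  calc _ ≤ _ := abs_add_le _ _
    _ ≤ 1 + 2 * π := add_le_add ((abs_sum_Ico_sin_div_le_mul x hx.le N).trans hNx) htail

theorem abs_sum_sin_div_le (p : ℕ) (x : ℝ) :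
    |∑ m ∈ Icc 1 p, sin (m * x) / m| ≤ 1 + 2 * π := by
  set S : ℝ → ℝ := fun x => ∑ m ∈ Icc 1 p, sin (m * x) / m
  have hper : Function.Periodic S (2 * π) := fun x => by
    simp only [S, mul_add, sin_add_nat_mul_two_pi]
  have hodd : ∀ x, S (-x) = -S x := fun x => by
    simp only [S, mul_neg, sin_neg, neg_div, sum_neg_distrib]
  obtain ⟨y, ⟨hy₁, hy₂⟩, hxy⟩ := hper.exists_mem_Ico two_pi_pos x (-π)
  change |S x| ≤ _
  rw [hxy]
  rcases lt_trichotomy y 0 with hy | rfl | hy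
  · rw [← neg_neg y, hodd, abs_neg]
    exact abs_sum_sin_div_le_of_pos (by linarith) (by linarith) p
  · simp [S]; positivity
  · exact abs_sum_sin_div_le_of_pos hy (by linarith) p

theorem T_eq_two_mul_sin_mul_sum (p q : ℕ) (x : ℝ) :
    T p q x = 2 * sin (q * x) * ∑ m ∈ Icc 1 p, sin (m * x) / m := by
  rw [T, ← sum_sub_distrib, mul_sum]
  refine sum_congr rfl fun m _ => ?_
  rw [div_sub_div_same, cos_sub_cos, show ((q - m) * x + (q + m) * x) / 2 = q * x by ring,
    show ((q - m) * x - (q + m) * x) / 2 = -(m * x) by ring, sin_neg]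
  ring

theorem abs_T_le (p q : ℕ) (x : ℝ) : |T p q x| ≤ 2 * (1 + 2 * π) := by
  rw [T_eq_two_mul_sin_mul_sum, abs_mul, abs_mul, abs_two]
  have := abs_sin_le_one (q * x)
  have := abs_sum_sin_div_le p x
  calc 2 * |sin (q * x)| * |∑ m ∈ Icc 1 p, sin (m * x) / m| ≤ 2 * 1 * (1 + 2 * π) := by gcongr
    _ = 2 * (1 + 2 * π) := by ring

theorem continuous_T (p q : ℕ) : Continuous (T p q) := by
  unfold T; fun_prop

theorem integral_cos_int_mul (k : ℤ) :
    ∫ t in -π..π, cos (k * t) = if k = 0 then 2 * π else 0 := by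
  split_ifs with hk
  · simp [hk]; ring
  · have hk' : (k : ℝ) ≠ 0 := by exact_mod_cast hk
    rw [intervalIntegral.integral_comp_mul_left _ hk', integral_cos, mul_neg, sin_neg,
      sin_int_mul_pi]
    simp

theorem integral_cos_nat_mul_mul_cos {j : ℕ} (hj : j ≠ 0) (n : ℕ) :
    ∫ t in -π..π, cos (j * t) * cos (n * t) = if j = n then π else 0 := by
  have hprod : ∀ t, cos (j * t) * cos (n * t)
      = (cos (((j + n : ℤ) : ℝ) * t) + cos (((j - n : ℤ) : ℝ) * t)) / 2 := fun t => by
    push_cast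
    rw [add_mul, sub_mul, cos_add, cos_sub]
    ring
  have hint : ∀ k : ℤ, IntervalIntegrable (fun t => cos (k * t)) volume (-π) π :=
    fun k => (by fun_prop : Continuous fun t => cos (k * t)).intervalIntegrable _ _
  simp_rw [hprod]
  rw [intervalIntegral.integral_div, intervalIntegral.integral_add (hint _) (hint _),
    integral_cos_int_mul, integral_cos_int_mul, if_neg (by omega)]
  split_ifs with h₁ h₂ h₂
  · ring
  · omega
  · omega
  · simp

theorem fourierA_const_mul (c : ℝ) (g : ℝ → ℝ) (n : ℕ) :
    fourierA (fun t => c * g t) n = c * fourierA g n := by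
  simp only [fourierA, mul_assoc, intervalIntegral.integral_const_mul]
  ring

theorem fourierA_tsum {g : ℕ → ℝ → ℝ} {C : ℕ → ℝ} (hg : ∀ k, Continuous (g k))
    (hgC : ∀ k t, |g k t| ≤ C k) (hC : Summable C) (n : ℕ) :
    fourierA (fun t => ∑' k, g k t) n = ∑' k, fourierA (g k) n := by
  have hsum : ∀ t, Summable fun k => g k t := fun t => hC.of_norm_bounded (hgC · t)
  have hasSum : HasSum (fun k => ∫ t in -π..π, g k t * cos (n * t))
      (∫ t in -π..π, (∑' k, g k t) * cos (n * t)) := by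
    refine intervalIntegral.hasSum_integral_of_dominated_convergence (fun k _ => C k)
      (fun k => ((hg k).mul (by fun_prop)).aestronglyMeasurable)
      (fun k => ae_of_all _ fun t _ => ?_) (ae_of_all _ fun _ _ => hC) intervalIntegrable_const
      (ae_of_all _ fun t _ => (hsum t).hasSum.mul_right _)
    rw [norm_mul, Real.norm_eq_abs, Real.norm_eq_abs]
    exact (mul_le_of_le_one_right (abs_nonneg _) (abs_cos_le_one _)).trans (hgC k t)
  simp only [fourierA]
  rw [tsum_mul_left, hasSum.tsum_eq]

theorem fourierA_T {p q : ℕ} (hpq : p < q) (n : ℕ) :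
    fourierA (T p q) n = ∑ m ∈ Icc 1 p,
      ((if q - m = n then (m : ℝ)⁻¹ else 0) - if q + m = n then (m : ℝ)⁻¹ else 0) := by
  have hexpand : ∀ t, T p q t * cos (n * t) = ∑ m ∈ Icc 1 p, (m : ℝ)⁻¹ *
      (cos (((q - m : ℕ) : ℝ) * t) * cos (n * t) - cos (((q + m : ℕ) : ℝ) * t) * cos (n * t)) := by
    intro t
    rw [T, ← sum_sub_distrib, sum_mul]
    refine sum_congr rfl fun m hm => ?_
    rw [Nat.cast_sub (by simp at hm; omega)]
    push_cast
    ring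
  have hcont : ∀ j : ℕ, Continuous fun t : ℝ => cos (j * t) * cos (n * t) := fun j => by fun_prop
  simp_rw [fourierA, hexpand]
  rw [intervalIntegral.integral_finsetSum fun m _ =>
    (by fun_prop : Continuous _).intervalIntegrable _ _, mul_sum]
  refine sum_congr rfl fun m hm => ?_
  have hm : 1 ≤ m ∧ m ≤ p := by simpa using hm
  rw [intervalIntegral.integral_const_mul, intervalIntegral.integral_sub
    ((hcont _).intervalIntegrable _ _) ((hcont _).intervalIntegrable _ _),
    integral_cos_nat_mul_mul_cos (by omega), integral_cos_nat_mul_mul_cos (by omega)]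
  have := pi_pos.ne'
  split_ifs <;> field_simp <;> ring

theorem fourierA_T_eq_zero {p q n : ℕ} (hpq : p < q) (hn : n < q - p ∨ q + p < n) :
    fourierA (T p q) n = 0 := by
  rw [fourierA_T hpq]
  refine sum_eq_zero fun m hm => ?_
  simp only [mem_Icc] at hm
  rw [if_neg (by omega), if_neg (by omega), sub_zero]

theorem fourierA_T_sub {p q m : ℕ} (hpq : p < q) (hm : m ∈ Icc 1 p) :
    fourierA (T p q) (q - m) = (m : ℝ)⁻¹ := by
  simp only [mem_Icc] at hm
  rw [fourierA_T hpq, sum_eq_single_of_mem m (by simpa using hm), if_pos rfl, if_neg (by omega),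
    sub_zero]
  intro m' hm' hne
  simp only [mem_Icc] at hm'
  rw [if_neg (by omega), if_neg (by omega), sub_zero]

theorem fourierPartialSum_sub_at_zero (g : ℝ → ℝ) {l r : ℕ} (hlr : l ≤ r) :
    fourierPartialSum g r 0 - fourierPartialSum g l 0 = ∑ n ∈ Ioc l r, fourierA g n := by
  simp only [fourierPartialSum, mul_zero, cos_zero, sin_zero, mul_one, add_zero,
    add_sub_add_left_eq_sub, show ∀ N, Icc 1 N = Ioc 0 N from Icc_add_one_left_eq_Ioc 0]
  rw [← sum_Ioc_consecutive _ (Nat.zero_le l) hlr, add_sub_cancel_left]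

theorem sum_Ioc_sub_one_eq_sum_Icc_sub {M : Type*} [AddCommMonoid M] (h : ℕ → M) {p q : ℕ}
    (hpq : p < q) : ∑ n ∈ Ioc (q - p - 1) (q - 1), h n = ∑ m ∈ Icc 1 p, h (q - m) := by
  refine sum_nbij' (q - ·) (q - ·) ?_ ?_ ?_ ?_ ?_ <;> intro n hn <;>
    simp only [mem_Ioc, mem_Icc] at hn ⊢
  · omega
  · omega
  · omega
  · omega
  · rw [Nat.sub_sub_self (by omega)]

theorem log_le_sum_Icc_inv (n : ℕ) : log n ≤ ∑ m ∈ Icc 1 n, (m : ℝ)⁻¹ := by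
  have := log_le_harmonic_floor n n.cast_nonneg
  rw [Nat.floor_natCast, harmonic_eq_sum_Icc] at this
  simpa using this

theorem not_tendsto_of_eventually_le_sub {s : ℕ → ℝ} {u v : ℕ → ℕ} (hu : Tendsto u atTop atTop)
    (hv : Tendsto v atTop atTop) {c : ℝ} (hc : 0 < c)
    (h : ∀ᶠ k in atTop, c ≤ s (u k) - s (v k)) (L : ℝ) : ¬Tendsto s atTop (nhds L) := by
  intro hs
  have hgap := (hs.comp hu).sub (hs.comp hv)
  rw [sub_self] at hgap
  linarith [ge_of_tendsto hgap h]

section Lacunary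

variable {p q : ℕ → ℕ}

theorem strictMono_sub_of_add_lt_sub (hsep : ∀ k, q k + p k < q (k + 1) - p (k + 1)) :
    StrictMono fun k => q k - p k :=
  strictMono_nat_of_lt_succ fun k => by have := hsep k; omega

theorem add_lt_sub_of_lt (hsep : ∀ k, q k + p k < q (k + 1) - p (k + 1)) {k l : ℕ} (hkl : k < l) :
    q k + p k < q l - p l :=
  (hsep k).trans_le ((strictMono_sub_of_add_lt_sub hsep).monotone hkl)

theorem fourierA_tsum_T_sub {a : ℕ → ℝ} (hpq : ∀ k, p k < q k)
    (hsep : ∀ k, q k + p k < q (k + 1) - p (k + 1)) (ha : Summable a) {K m : ℕ}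
    (hm : m ∈ Icc 1 (p K)) :
    fourierA (fun x => ∑' k, a k * T (p k) (q k) x) (q K - m) = a K * (m : ℝ)⁻¹ := by
  rw [fourierA_tsum (g := fun k x => a k * T (p k) (q k) x)
    (C := fun k => |a k| * (2 * (1 + 2 * π))) (fun k => continuous_const.mul (continuous_T _ _))
    (fun k x => by rw [abs_mul]; gcongr; exact abs_T_le _ _ _) (ha.abs.mul_right _),
    tsum_eq_single K, fourierA_const_mul, fourierA_T_sub (hpq K) hm]
  intro k hk
  simp only [mem_Icc] at hm
  rw [fourierA_const_mul, fourierA_T_eq_zero (hpq k), mul_zero]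
  rcases hk.lt_or_gt with hk | hk
  · have := add_lt_sub_of_lt hsep hk; omega
  · have := add_lt_sub_of_lt hsep hk; have := hpq K; omega

end Lacunary

/-- The Fourier series of `f` diverges at `x = 0`: the sequence of Fourier partial sums
`(S_N(f)(0))` has no limit as `N → ∞`. -/
theorem stmt_1 (p q : ℕ → ℕ) (a : ℕ → ℝ)
    (hpq : ∀ k, 1 < p k ∧ p k < q k)
    (hsep : ∀ k, q k + p k < q (k + 1) - p (k + 1))
    (hapos : ∀ k, 0 < a k)
    (hsum : Summable a)
    (hliminf : 0 < Filter.liminf (fun k => a k * Real.log (p k)) Filter.atTop)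
    (f : ℝ → ℝ) (hf : ∀ x, f x = ∑' k, a k * T (p k) (q k) x) :
    ¬ ∃ L : ℝ, Filter.Tendsto (fun N => fourierPartialSum f N 0) Filter.atTop (nhds L) := by
  rintro ⟨L, hL⟩
  have hpq' : ∀ k, p k < q k := fun k => (hpq k).2
  have hblock : ∀ K, fourierPartialSum f (q K - 1) 0 - fourierPartialSum f (q K - p K - 1) 0
      = a K * ∑ m ∈ Icc 1 (p K), (m : ℝ)⁻¹ := fun K => by
    rw [fourierPartialSum_sub_at_zero f (by omega), sum_Ioc_sub_one_eq_sum_Icc_sub _ (hpq' K),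
      mul_sum, funext hf]
    exact sum_congr rfl fun m hm => fourierA_tsum_T_sub hpq' hsep hsum hm
  have hbdd : IsBoundedUnder (· ≥ ·) atTop fun k => a k * log (p k) :=
    isBoundedUnder_of ⟨0, fun k => mul_nonneg (hapos k).le (log_natCast_nonneg _)⟩
  have hv : Tendsto (fun K => q K - p K - 1) atTop atTop :=
    (tendsto_sub_atTop_nat 1).comp (strictMono_sub_of_add_lt_sub hsep).tendsto_atTop
  have hu : Tendsto (fun K => q K - 1) atTop atTop :=
    tendsto_atTop_mono (fun K => Nat.sub_le_sub_right (Nat.sub_le _ _) 1) hv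
  refine not_tendsto_of_eventually_le_sub hu hv (half_pos hliminf) ?_ L hL
  filter_upwards [eventually_lt_of_lt_liminf (half_lt_self hliminf) hbdd] with K hK
  rw [hblock]
  exact hK.le.trans (mul_le_mul_of_nonneg_left (log_le_sum_Icc_inv _) (hapos K).le)
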